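/- arXiv:1101.1161 — 3 statements merged into one kernel-verified Lean document; each statement's English description precedes it below -/
import Mathlib

section
/- Let (a_n)_{n≥0} be nonnegative reals with a_0 > 0, a_0 + a_1 < 1, ∑_{n=0}^∞ a_n = 1 and ∑_{n=1}^∞ n a_n = 1, let G(t) = ∑_{n=0}^∞ a_n t^n, and let F : (0,1) → (0,1) satisfy F(t) = t·G(F(t)) for all t ∈ (0,1) and lim_{t→1−} F(t) = 1. Let ψ₁ ∈ ℋ'. Then: (1) if ψ(x)/ψ₁(x) → 0 as x → 0+, then (1 − F(t))/ψ₁^{−1}(1−t) → ∞ as t → 1−; (2) if ψ(x)/ψ₁(x) → ∞ as x → 0+, then (1 − F(t))/ψ₁^{−1}(1−t) → 0 as t → 1−; (3) if there are constants 0 < c₁ < c₂ and x₁ > 0 with c₁ψ₁(x) ≤ ψ(x) ≤ c₂ψ₁(x) for all x ∈ (0,x₁), then there are constants 0 < c₁' < c₂' and t₀ ∈ (0,1) with c₁'ψ₁^{−1}(1−t) ≤ 1 − F(t) ≤ c₂'ψ₁^{−1}(1−t) for all t ∈ (t₀,1). -/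
/-!
Write `h = 1 - F t`. The fixed-point equation `F = t G(F)` gives `ψ(h) = (1 - t) F(t) / t`, so as
`t → 1⁻` the value `ψ(h)` lies between `(1 - t) / 2` and `2 (1 - t) = 2 ψ₁(g₁(1 - t))`. Comparing
`ψ` with `ψ₁` at `h` therefore amounts to comparing `ψ₁(h)` with `ψ₁(g₁(1 - t))`, and monotonicity of
`ψ₁` turns this into a comparison of `h` with `g₁(1 - t)`: through (c2), `ψ₁(n x) ≤ n² ψ₁(x)`, for
parts (1) and (2), and through superadditivity, `k ψ₁(x) ≤ ψ₁(k x)`, for part (3).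
-/

open Filter Set Topology

noncomputable def psi (a : ℕ → ℝ) (h : ℝ) : ℝ := (∑' n : ℕ, a n * (1 - h) ^ n) - (1 - h)

section Comparison

variable {f : ℝ → ℝ}

theorem pos_of_strictMonoOn_Icc (hf : StrictMonoOn f (Icc 0 1)) (h0 : f 0 = 0) {x : ℝ}
    (hx : x ∈ Ioc (0 : ℝ) 1) : 0 < f x :=
  h0 ▸ hf (left_mem_Icc.2 zero_le_one) (Ioc_subset_Icc_self hx) hx.1

theorem nat_mul_le_of_sq_mul_le (hf : StrictMonoOn f (Icc 0 1))
    (hquad : ∀ m : ℕ, 0 < m → ∀ x : ℝ, 0 ≤ x → x ≤ 1 / m → f (m * x) ≤ (m : ℝ) ^ 2 * f x)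
    {n : ℕ} (hn : 0 < n) {x z : ℝ} (hx : x ∈ Icc (0 : ℝ) 1) (hz : z ∈ Icc (0 : ℝ) 1)
    (h : (n : ℝ) ^ 2 * f x ≤ f z) : n * x ≤ z := by
  have hn' : (0 : ℝ) < n := Nat.cast_pos.2 hn
  have hzn : z / n ∈ Icc (0 : ℝ) 1 :=
    ⟨div_nonneg hz.1 hn'.le, (div_le_one hn').2 (hz.2.trans (Nat.one_le_cast.2 hn))⟩
  have hfz : f z ≤ n ^ 2 * f (z / n) := by
    simpa [mul_div_cancel₀ _ hn'.ne'] using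
      hquad n hn (z / n) hzn.1 (div_le_div_of_nonneg_right hz.2 hn'.le)
  have hxz : x ≤ z / n :=
    (hf.le_iff_le hx hzn).1 (le_of_mul_le_mul_left (h.trans hfz) (by positivity))
  rwa [le_div_iff₀ hn', mul_comm] at hxz

theorem nat_mul_le_of_superadditive (h0 : f 0 = 0)
    (hsup : ∀ x y : ℝ, 0 ≤ x → 0 ≤ y → x + y ≤ 1 → f x + f y ≤ f (x + y))
    (k : ℕ) {x : ℝ} (hx : 0 ≤ x) (hkx : k * x ≤ 1) : k * f x ≤ f (k * x) := by
  induction k with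
  | zero => simp [h0]
  | succ k ih =>
    push_cast at hkx ⊢
    calc (k + 1) * f x = k * f x + f x := by ring
      _ ≤ f (k * x) + f x := by gcongr; exact ih (by linarith)
      _ ≤ f (k * x + x) := hsup _ _ (by positivity) hx (by linarith)
      _ = f ((k + 1) * x) := by rw [add_mul, one_mul]

theorem le_nat_mul_of_le_nat_mul (hf : StrictMonoOn f (Icc 0 1)) (h0 : f 0 = 0)
    (hsup : ∀ x y : ℝ, 0 ≤ x → 0 ≤ y → x + y ≤ 1 → f x + f y ≤ f (x + y))
    (k : ℕ) {x z : ℝ} (hx : x ∈ Icc (0 : ℝ) 1) (hz : z ∈ Icc (0 : ℝ) 1)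
    (h : f z ≤ k * f x) : z ≤ k * x := by
  by_cases hkx : k * x ≤ 1
  · exact (hf.le_iff_le hz ⟨by positivity [hx.1], hkx⟩).1
      (h.trans (nat_mul_le_of_superadditive h0 hsup k hx.1 hkx))
  · linarith [hz.2]

end Comparison

section Asymptotics

variable {α : Type*} {l : Filter α} {ψ f : ℝ → ℝ} {h g : α → ℝ}

theorem tendsto_div_atTop_of_tendsto_ratio_zero (hf : StrictMonoOn f (Icc 0 1)) (h0 : f 0 = 0)
    (hquad : ∀ m : ℕ, 0 < m → ∀ x : ℝ, 0 ≤ x → x ≤ 1 / m → f (m * x) ≤ (m : ℝ) ^ 2 * f x)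
    (hψ : Tendsto (fun x => ψ x / f x) (𝓝[>] 0) (𝓝 0))
    (hh : Tendsto h l (𝓝[>] 0)) (hg : ∀ᶠ t in l, g t ∈ Ioc (0 : ℝ) 1)
    {C : ℝ} (hC : ∀ᶠ t in l, f (g t) ≤ C * ψ (h t)) :
    Tendsto (fun t => h t / g t) l atTop := by
  refine tendsto_atTop.2 fun K => ?_
  obtain ⟨n, hn⟩ := exists_nat_gt (max K 0)
  have hn0 : 0 < n := by exact_mod_cast (le_max_right K 0).trans_lt hn
  have hsmall : ∀ᶠ t in l, C * n ^ 2 * (ψ (h t) / f (h t)) < 1 := by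
    have := (hψ.comp hh).const_mul (C * n ^ 2)
    rw [mul_zero] at this
    exact this.eventually (gt_mem_nhds one_pos)
  filter_upwards [hh (Ioc_mem_nhdsGT one_pos), hg, hC, hsmall] with t hht hgt hCt hst
  rw [← mul_div_assoc, div_lt_one (pos_of_strictMonoOn_Icc hf h0 hht)] at hst
  have hcmp : (n : ℝ) ^ 2 * f (g t) ≤ f (h t) := by
    nlinarith [mul_le_mul_of_nonneg_left hCt (sq_nonneg (n : ℝ))]
  have hng := nat_mul_le_of_sq_mul_le hf hquad hn0 (Ioc_subset_Icc_self hgt)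
    (Ioc_subset_Icc_self hht) hcmp
  rw [le_div_iff₀ hgt.1]
  nlinarith [le_max_left K 0, hgt.1]

theorem tendsto_div_zero_of_tendsto_ratio_atTop (hf : StrictMonoOn f (Icc 0 1)) (h0 : f 0 = 0)
    (hquad : ∀ m : ℕ, 0 < m → ∀ x : ℝ, 0 ≤ x → x ≤ 1 / m → f (m * x) ≤ (m : ℝ) ^ 2 * f x)
    (hψ : Tendsto (fun x => ψ x / f x) (𝓝[>] 0) atTop)
    (hh : Tendsto h l (𝓝[>] 0)) (hg : ∀ᶠ t in l, g t ∈ Ioc (0 : ℝ) 1)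
    {C : ℝ} (hC0 : 0 < C) (hC : ∀ᶠ t in l, ψ (h t) ≤ C * f (g t)) :
    Tendsto (fun t => h t / g t) l (𝓝 0) := by
  have hh1 : ∀ᶠ t in l, h t ∈ Ioc (0 : ℝ) 1 := hh (Ioc_mem_nhdsGT one_pos)
  refine tendsto_order.2 ⟨fun b hb => ?_, fun b hb => ?_⟩
  · filter_upwards [hh1, hg] with t hht hgt
    exact hb.trans_le (div_nonneg hht.1.le hgt.1.le)
  obtain ⟨n, hn⟩ := exists_nat_gt b⁻¹
  have hn0 : 0 < n := by exact_mod_cast (inv_pos.2 hb).trans hn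
  have hlarge : ∀ᶠ t in l, C * n ^ 2 ≤ ψ (h t) / f (h t) :=
    (hψ.comp hh).eventually (eventually_ge_atTop _)
  filter_upwards [hh1, hg, hC, hlarge] with t hht hgt hCt hlt
  rw [le_div_iff₀ (pos_of_strictMonoOn_Icc hf h0 hht)] at hlt
  have hcmp : (n : ℝ) ^ 2 * f (h t) ≤ f (g t) :=
    le_of_mul_le_mul_left (by linarith) hC0
  have hng := nat_mul_le_of_sq_mul_le hf hquad hn0 (Ioc_subset_Icc_self hht)
    (Ioc_subset_Icc_self hgt) hcmp
  rw [inv_lt_iff_one_lt_mul₀ hb] at hn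
  rw [div_lt_iff₀ hgt.1]
  nlinarith [hht.1]

theorem exists_bounds_of_ratio_bounded (hf : StrictMonoOn f (Icc 0 1)) (h0 : f 0 = 0)
    (hsup : ∀ x y : ℝ, 0 ≤ x → 0 ≤ y → x + y ≤ 1 → f x + f y ≤ f (x + y))
    {c₁ c₂ x₁ : ℝ} (hc₁ : 0 < c₁) (hx₁ : 0 < x₁)
    (hψ : ∀ x, 0 < x → x < x₁ → c₁ * f x ≤ ψ x ∧ ψ x ≤ c₂ * f x)
    (hh : Tendsto h l (𝓝[>] 0)) (hg : ∀ᶠ t in l, g t ∈ Ioc (0 : ℝ) 1)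
    {C : ℝ} (hC0 : 0 ≤ C) (hCl : ∀ᶠ t in l, f (g t) ≤ C * ψ (h t))
    (hCu : ∀ᶠ t in l, ψ (h t) ≤ C * f (g t)) :
    ∃ c₁' c₂' : ℝ, 0 < c₁' ∧ c₁' < c₂' ∧ ∀ᶠ t in l, c₁' * g t ≤ h t ∧ h t ≤ c₂' * g t := by
  obtain ⟨n, hn⟩ := exists_nat_ge (max (C * c₂) (C / c₁))
  have hN : (2 : ℝ) ≤ (n + 2 : ℕ) := by push_cast; linarith [n.cast_nonneg (α := ℝ)]
  refine ⟨((n + 2 : ℕ) : ℝ)⁻¹, (n + 2 : ℕ), by positivity,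
    by rw [inv_lt_iff_one_lt_mul₀ (by positivity)]; nlinarith, ?_⟩
  filter_upwards [hh (Ioo_mem_nhdsGT (lt_min hx₁ one_pos)), hg, hCl, hCu]
    with t ⟨hh0, hh1⟩ hgt hClt hCut
  obtain ⟨hψl, hψu⟩ := hψ (h t) hh0 (hh1.trans_le (min_le_left _ _))
  have hhI : h t ∈ Icc (0 : ℝ) 1 := ⟨hh0.le, (hh1.trans_le (min_le_right _ _)).le⟩
  have hfh := (pos_of_strictMonoOn_Icc hf h0 ⟨hh0, hhI.2⟩).le
  have hfg := (pos_of_strictMonoOn_Icc hf h0 hgt).le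
  have hN1 : C * c₂ ≤ (n + 2 : ℕ) := by push_cast; linarith [le_max_left (C * c₂) (C / c₁)]
  have hN2 : C / c₁ ≤ (n + 2 : ℕ) := by push_cast; linarith [le_max_right (C * c₂) (C / c₁)]
  constructor
  · have hle := le_nat_mul_of_le_nat_mul hf h0 hsup (n + 2) hhI (Ioc_subset_Icc_self hgt) (by
      calc f (g t) ≤ C * ψ (h t) := hClt
        _ ≤ C * c₂ * f (h t) := by rw [mul_assoc]; gcongr
        _ ≤ _ := by gcongr)
    rw [inv_mul_le_iff₀ (by positivity)]
    exact hle
  · refine le_nat_mul_of_le_nat_mul hf h0 hsup (n + 2) (Ioc_subset_Icc_self hgt) hhI ?_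
    calc f (h t) ≤ ψ (h t) / c₁ := by rw [le_div_iff₀ hc₁]; linarith
      _ ≤ C / c₁ * f (g t) := by rw [div_mul_eq_mul_div]; gcongr
      _ ≤ _ := by gcongr

end Asymptotics

section FixedPoint

variable {a : ℕ → ℝ} {F : ℝ → ℝ}

theorem psi_one_sub_eq (hFeq : ∀ t : ℝ, 0 < t → t < 1 → F t = t * ∑' n : ℕ, a n * F t ^ n)
    {t : ℝ} (ht0 : 0 < t) (ht1 : t < 1) : psi a (1 - F t) = (1 - t) * F t / t := by
  have hG : ∑' n : ℕ, a n * F t ^ n = F t / t := by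
    rw [eq_div_iff ht0.ne', mul_comm, ← hFeq t ht0 ht1]
  rw [psi, sub_sub_cancel, hG]
  field_simp

theorem tendsto_one_sub_nhdsGT (hF : ∀ t : ℝ, 0 < t → t < 1 → 0 < F t ∧ F t < 1)
    (hFlim : Tendsto F (𝓝[<] 1) (𝓝 1)) : Tendsto (fun t => 1 - F t) (𝓝[<] 1) (𝓝[>] 0) := by
  refine tendsto_nhdsWithin_iff.2 ⟨by simpa using (tendsto_const_nhds (x := (1 : ℝ))).sub hFlim, ?_⟩
  filter_upwards [Ioo_mem_nhdsLT one_pos] with t ht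
  exact sub_pos.2 (hF t ht.1 ht.2).2

theorem eventually_psi_one_sub_mem_Icc (hF : ∀ t : ℝ, 0 < t → t < 1 → 0 < F t ∧ F t < 1)
    (hFeq : ∀ t : ℝ, 0 < t → t < 1 → F t = t * ∑' n : ℕ, a n * F t ^ n)
    (hFlim : Tendsto F (𝓝[<] 1) (𝓝 1)) :
    ∀ᶠ t in 𝓝[<] 1, psi a (1 - F t) ∈ Icc ((1 - t) / 2) (2 * (1 - t)) := by
  filter_upwards [Ioo_mem_nhdsLT (show (1 : ℝ) / 2 < 1 by norm_num),
    hFlim.eventually (lt_mem_nhds (show (1 : ℝ) / 2 < 1 by norm_num))] with t ⟨ht0, ht1⟩ hFt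
  have hFt1 := (hF t (by linarith) ht1).2
  rw [psi_one_sub_eq hFeq (by linarith) ht1, mem_Icc, div_le_div_iff₀ two_pos (by linarith),
    div_le_iff₀ (by linarith)]
  constructor <;> nlinarith

end FixedPoint

theorem eventually_inverse_one_sub {f g : ℝ → ℝ} (hf : StrictMonoOn f (Icc 0 1)) (h0 : f 0 = 0)
    (hg : ∀ y, 0 ≤ y → y ≤ f 1 → g y ∈ Icc (0 : ℝ) 1 ∧ f (g y) = y) :
    ∀ᶠ t in 𝓝[<] 1, g (1 - t) ∈ Ioc (0 : ℝ) 1 ∧ f (g (1 - t)) = 1 - t := by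
  have hf1 := pos_of_strictMonoOn_Icc hf h0 (right_mem_Ioc.2 one_pos)
  filter_upwards [Ioo_mem_nhdsLT (show 1 - f 1 < 1 by linarith)] with t ⟨ht0, ht1⟩
  obtain ⟨⟨hg0, hg1⟩, hfg⟩ := hg (1 - t) (by linarith) (by linarith)
  refine ⟨⟨hg0.lt_of_ne ?_, hg1⟩, hfg⟩
  rintro hg0'
  rw [← hg0', h0] at hfg
  linarith

theorem exists_forall_Ioo_of_eventually_nhdsLT {P : ℝ → Prop} (hP : ∀ᶠ t in 𝓝[<] 1, P t) :
    ∃ t₀ : ℝ, 0 < t₀ ∧ t₀ < 1 ∧ ∀ t, t₀ < t → t < 1 → P t := by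
  obtain ⟨t₀, ⟨ht₀, ht₀1⟩, hsub⟩ :=
    (mem_nhdsLT_iff_exists_mem_Ico_Ioo_subset (show (1 : ℝ) / 2 < 1 by norm_num)).1 hP
  exact ⟨t₀, by linarith, ht₀1, fun t ht ht1 => hsub ⟨ht, ht1⟩⟩

theorem stmt_12_general (a : ℕ → ℝ)
    (F : ℝ → ℝ)
    (hF : ∀ t : ℝ, 0 < t → t < 1 → 0 < F t ∧ F t < 1)
    (hFeq : ∀ t : ℝ, 0 < t → t < 1 → F t = t * ∑' n : ℕ, a n * F t ^ n)
    (hFlim : Filter.Tendsto F (nhdsWithin 1 (Set.Iio 1)) (nhds 1))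
    (ψ₁ : ℝ → ℝ)
    (h1m : StrictMonoOn ψ₁ (Set.Icc 0 1))
    (h10 : ψ₁ 0 = 0)
    (h1c1 : ∀ x y : ℝ, 0 ≤ x → 0 ≤ y → x + y ≤ 1 → ψ₁ x + ψ₁ y ≤ ψ₁ (x + y))
    (h1c2 : ∀ m : ℕ, 0 < m → ∀ x : ℝ, 0 ≤ x → x ≤ 1 / m →
      ψ₁ (m * x) ≤ (m : ℝ) ^ 2 * ψ₁ x)
    (g₁ : ℝ → ℝ)
    (hg12 : ∀ y, 0 ≤ y → y ≤ ψ₁ 1 → g₁ y ∈ Set.Icc (0:ℝ) 1 ∧ ψ₁ (g₁ y) = y) :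
    (Filter.Tendsto
        (fun x : ℝ => ((∑' n : ℕ, a n * (1 - x) ^ n) - (1 - x)) / ψ₁ x)
        (nhdsWithin 0 (Set.Ioi 0)) (nhds 0) →
      Filter.Tendsto (fun t : ℝ => (1 - F t) / g₁ (1 - t))
        (nhdsWithin 1 (Set.Iio 1)) Filter.atTop) ∧
    (Filter.Tendsto
        (fun x : ℝ => ((∑' n : ℕ, a n * (1 - x) ^ n) - (1 - x)) / ψ₁ x)
        (nhdsWithin 0 (Set.Ioi 0)) Filter.atTop →
      Filter.Tendsto (fun t : ℝ => (1 - F t) / g₁ (1 - t))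
        (nhdsWithin 1 (Set.Iio 1)) (nhds 0)) ∧
    ((∃ c₁ c₂ x₁ : ℝ, 0 < c₁ ∧ c₁ < c₂ ∧ 0 < x₁ ∧
        ∀ x : ℝ, 0 < x → x < x₁ →
          c₁ * ψ₁ x ≤ (∑' n : ℕ, a n * (1 - x) ^ n) - (1 - x) ∧
          (∑' n : ℕ, a n * (1 - x) ^ n) - (1 - x) ≤ c₂ * ψ₁ x) →
      ∃ c₁' c₂' t₀ : ℝ, 0 < c₁' ∧ c₁' < c₂' ∧ 0 < t₀ ∧ t₀ < 1 ∧
        ∀ t : ℝ, t₀ < t → t < 1 →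
          c₁' * g₁ (1 - t) ≤ 1 - F t ∧ 1 - F t ≤ c₂' * g₁ (1 - t)) := by
  have hh := tendsto_one_sub_nhdsGT hF hFlim
  have hpsi := eventually_psi_one_sub_mem_Icc hF hFeq hFlim
  have hinv := eventually_inverse_one_sub h1m h10 hg12
  have hg : ∀ᶠ t in 𝓝[<] 1, g₁ (1 - t) ∈ Ioc (0 : ℝ) 1 := hinv.mono fun _ h => h.1
  have hlow : ∀ᶠ t in 𝓝[<] 1, ψ₁ (g₁ (1 - t)) ≤ 2 * psi a (1 - F t) := by
    filter_upwards [hpsi, hinv] with t ht hgt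
    linarith [ht.1, hgt.2]
  have hupp : ∀ᶠ t in 𝓝[<] 1, psi a (1 - F t) ≤ 2 * ψ₁ (g₁ (1 - t)) := by
    filter_upwards [hpsi, hinv] with t ht hgt
    linarith [ht.2, hgt.2]
  refine ⟨fun H => tendsto_div_atTop_of_tendsto_ratio_zero (ψ := psi a) h1m h10 h1c2 H hh hg hlow,
    fun H => tendsto_div_zero_of_tendsto_ratio_atTop (ψ := psi a) h1m h10 h1c2 H hh hg two_pos hupp,
    ?_⟩
  rintro ⟨c₁, c₂, x₁, hc₁, -, hx₁, hbd⟩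
  obtain ⟨c₁', c₂', hc₁', hc', hev⟩ := exists_bounds_of_ratio_bounded (ψ := psi a) h1m h10 h1c1
    hc₁ hx₁ hbd hh hg zero_le_two hlow hupp
  obtain ⟨t₀, ht₀, ht₀1, hbounds⟩ := exists_forall_Ioo_of_eventually_nhdsLT hev
  exact ⟨c₁', c₂', t₀, hc₁', hc', ht₀, ht₀1, hbounds⟩

theorem stmt_12 (a : ℕ → ℝ) (ha : ∀ n, 0 ≤ a n) (ha0 : 0 < a 0)
    (ha01 : a 0 + a 1 < 1)
    (hsum : ∑' n, a n = 1) (hμ : ∑' n : ℕ, (n : ℝ) * a n = 1)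
    (F : ℝ → ℝ)
    (hF : ∀ t : ℝ, 0 < t → t < 1 → 0 < F t ∧ F t < 1)
    (hFeq : ∀ t : ℝ, 0 < t → t < 1 → F t = t * ∑' n : ℕ, a n * F t ^ n)
    (hFlim : Filter.Tendsto F (nhdsWithin 1 (Set.Iio 1)) (nhds 1))
    (ψ₁ : ℝ → ℝ)
    (h1c : ContinuousOn ψ₁ (Set.Icc 0 1)) (h1m : StrictMonoOn ψ₁ (Set.Icc 0 1))
    (h10 : ψ₁ 0 = 0) (h1nn : ∀ x ∈ Set.Icc (0:ℝ) 1, 0 ≤ ψ₁ x)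
    (h1c1 : ∀ x y : ℝ, 0 ≤ x → 0 ≤ y → x + y ≤ 1 → ψ₁ x + ψ₁ y ≤ ψ₁ (x + y))
    (h1c2 : ∀ m : ℕ, 0 < m → ∀ x : ℝ, 0 ≤ x → x ≤ 1 / m →
      ψ₁ (m * x) ≤ (m : ℝ) ^ 2 * ψ₁ x)
    (g₁ : ℝ → ℝ)
    (hg11 : ∀ y, ψ₁ 1 ≤ y → g₁ y = 1)
    (hg12 : ∀ y, 0 ≤ y → y ≤ ψ₁ 1 → g₁ y ∈ Set.Icc (0:ℝ) 1 ∧ ψ₁ (g₁ y) = y) :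
    (Filter.Tendsto
        (fun x : ℝ => ((∑' n : ℕ, a n * (1 - x) ^ n) - (1 - x)) / ψ₁ x)
        (nhdsWithin 0 (Set.Ioi 0)) (nhds 0) →
      Filter.Tendsto (fun t : ℝ => (1 - F t) / g₁ (1 - t))
        (nhdsWithin 1 (Set.Iio 1)) Filter.atTop) ∧
    (Filter.Tendsto
        (fun x : ℝ => ((∑' n : ℕ, a n * (1 - x) ^ n) - (1 - x)) / ψ₁ x)
        (nhdsWithin 0 (Set.Ioi 0)) Filter.atTop →
      Filter.Tendsto (fun t : ℝ => (1 - F t) / g₁ (1 - t))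
        (nhdsWithin 1 (Set.Iio 1)) (nhds 0)) ∧
    ((∃ c₁ c₂ x₁ : ℝ, 0 < c₁ ∧ c₁ < c₂ ∧ 0 < x₁ ∧
        ∀ x : ℝ, 0 < x → x < x₁ →
          c₁ * ψ₁ x ≤ (∑' n : ℕ, a n * (1 - x) ^ n) - (1 - x) ∧
          (∑' n : ℕ, a n * (1 - x) ^ n) - (1 - x) ≤ c₂ * ψ₁ x) →
      ∃ c₁' c₂' t₀ : ℝ, 0 < c₁' ∧ c₁' < c₂' ∧ 0 < t₀ ∧ t₀ < 1 ∧
        ∀ t : ℝ, t₀ < t → t < 1 →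
          c₁' * g₁ (1 - t) ≤ 1 - F t ∧ 1 - F t ≤ c₂' * g₁ (1 - t)) :=
  stmt_12_general a F hF hFeq hFlim ψ₁ h1m h10 h1c1 h1c2 g₁ hg12
end

section
/- Let (a_n)_{n≥0} be nonnegative reals with a_0 > 0, a_0 + a_1 < 1, ∑_{n=0}^∞ a_n = 1 and ∑_{n=1}^∞ n a_n = 1, let G(t) = ∑_{n=0}^∞ a_n t^n, and let β ∈ (0,1). Assume 1 − G'(x) ∼ (1−x)^β as x → 1−, i.e. there exist 0 < c₁ < c₂ and x₁ ∈ (0,1) with c₁(1−x)^β ≤ 1 − G'(x) ≤ c₂(1−x)^β for all x ∈ (x₁,1), where G'(x) = ∑_{n=1}^∞ n a_n x^{n−1}. Let (f_n)_{n≥1} be nonnegative reals with ∑_{n=1}^∞ f_n = 1 such that F(t) := ∑_{n=1}^∞ f_n t^n satisfies F(t) = t·G(F(t)) for all t ∈ (0,1). Then: (1) there exist constants 0 < c₁' < c₂' and t₀ ∈ (0,1) with c₁'(1−t)^{1/(1+β)} ≤ 1 − F(t) ≤ c₂'(1−t)^{1/(1+β)} for all t ∈ (t₀,1); (2) for α ∈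 (0,1), ∑_{n=1}^∞ f_n n^α < ∞ if and only if α < 1/(1+β). -/
/-!
Write `s = F(t)`, so that `s = t G(s)` and `G(s) - s = (1 - t) G(s)` lies between `a₀ (1 - t)` and
`1 - t`. Termwise comparison of `G(s) - s = (1 - s) ∑ aₙ ∑_{k<n} (1 - sᵏ)` with
`(1 - s)(1 - G'(s)) = (1 - s) ∑ n aₙ (1 - sⁿ⁻¹)` gives `G(s) - s ≤ (1 - s)(1 - G'(s)) ≤ 2 (G(s) - s)`,
hence `1 - t ≍ (1 - s)^(1+β)`; Abel's theorem (`F(t) → 1`) makes the hypothesis on `G'` applicable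
at `s`. This is (1), with `γ = 1/(1+β)`.

For (2), taking `t = 1 - 1/n` in the upper bound shows `∑_{k ≥ n} f_k = O(n^(-γ))`, and summing over
dyadic blocks gives `∑ f_n n^α < ∞` for `α < γ`. Conversely, since `1 - tᵏ ≤ (k(1 - t))^γ`, the
finiteness of `∑ f_n n^γ` would give `(1 - F(t)) / (1 - t)^γ → 0` by dominated convergence,
contradicting the lower bound.
-/

open Finset Filter Topology

lemma one_sub_pow_add_le {x : ℝ} (h0 : 0 ≤ x) (h1 : x ≤ 1) (j k : ℕ) :
    1 - x ^ (j + k) ≤ (1 - x ^ j) + (1 - x ^ k) := by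
  rw [pow_add]
  nlinarith [pow_le_one₀ h0 h1 (n := j), pow_le_one₀ h0 h1 (n := k), pow_nonneg h0 j]

lemma sum_range_one_sub_pow_le {x : ℝ} (h0 : 0 ≤ x) (h1 : x ≤ 1) (n : ℕ) :
    ∑ k ∈ range n, (1 - x ^ k) ≤ n * (1 - x ^ (n - 1)) := by
  calc ∑ k ∈ range n, (1 - x ^ k) ≤ ∑ _k ∈ range n, (1 - x ^ (n - 1)) :=
        sum_le_sum fun k hk =>
          sub_le_sub_left (pow_le_pow_of_le_one h0 h1 (Nat.le_sub_one_of_lt (mem_range.1 hk))) 1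
    _ = n * (1 - x ^ (n - 1)) := by rw [sum_const, card_range, nsmul_eq_mul]

lemma mul_one_sub_pow_le_two_mul_sum {x : ℝ} (h0 : 0 ≤ x) (h1 : x ≤ 1) (n : ℕ) :
    n * (1 - x ^ (n - 1)) ≤ 2 * ∑ k ∈ range n, (1 - x ^ k) :=
  calc n * (1 - x ^ (n - 1)) = ∑ k ∈ range n, (1 - x ^ (k + (n - 1 - k))) := by
        have h : ∀ k ∈ range n, k + (n - 1 - k) = n - 1 := fun k hk => by
          have := mem_range.1 hk; omega
        rw [sum_congr rfl fun k hk => by rw [h k hk], sum_const, card_range, nsmul_eq_mul]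
    _ ≤ ∑ k ∈ range n, ((1 - x ^ k) + (1 - x ^ (n - 1 - k))) :=
        sum_le_sum fun k _ => one_sub_pow_add_le h0 h1 _ _
    _ = 2 * ∑ k ∈ range n, (1 - x ^ k) := by
        rw [sum_add_distrib, sum_range_reflect (fun k => 1 - x ^ k) n]; ring

lemma one_sub_pow_le_mul_one_sub {t : ℝ} (h0 : 0 ≤ t) (k : ℕ) : 1 - t ^ k ≤ k * (1 - t) := by
  have := one_add_mul_le_pow (a := t - 1) (by linarith) k
  simp only [add_sub_cancel] at this
  linarith

lemma one_sub_pow_le_rpow {t : ℝ} (h0 : 0 ≤ t) (h1 : t ≤ 1) {γ : ℝ} (hγ0 : 0 ≤ γ) (hγ1 : γ ≤ 1)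
    (k : ℕ) : 1 - t ^ k ≤ (k * (1 - t)) ^ γ := by
  have hk : 0 ≤ (k : ℝ) * (1 - t) := mul_nonneg k.cast_nonneg (sub_nonneg.2 h1)
  rcases le_total (k * (1 - t)) 1 with hx | hx
  · calc 1 - t ^ k ≤ k * (1 - t) := one_sub_pow_le_mul_one_sub h0 k
      _ = (k * (1 - t)) ^ (1 : ℝ) := (Real.rpow_one _).symm
      _ ≤ (k * (1 - t)) ^ γ := Real.rpow_le_rpow_of_exponent_ge' hk hx hγ0 hγ1
  · calc 1 - t ^ k ≤ 1 := by linarith [pow_nonneg h0 k]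
      _ ≤ (k * (1 - t)) ^ γ := Real.one_le_rpow hx hγ0

lemma hasSum_of_tsum_eq_one {f : ℕ → ℝ} (h : ∑' n, f n = 1) : HasSum f 1 := by
  by_cases hs : Summable f
  · exact h ▸ hs.hasSum
  · simp [tsum_eq_zero_of_not_summable hs] at h

lemma Summable.mul_pow_of_nonneg {c : ℕ → ℝ} (hc : Summable c) (hc0 : ∀ n, 0 ≤ c n) {x : ℝ}
    (h0 : 0 ≤ x) (h1 : x ≤ 1) (e : ℕ → ℕ) : Summable fun n => c n * x ^ e n :=
  hc.of_nonneg_of_le (fun n => mul_nonneg (hc0 n) (pow_nonneg h0 _))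
    fun n => mul_le_of_le_one_right (hc0 n) (pow_le_one₀ h0 h1)

lemma tsum_mul_pow_le_one {a : ℕ → ℝ} (ha : ∀ n, 0 ≤ a n) (hsum : HasSum a 1) {s : ℝ}
    (h0 : 0 ≤ s) (h1 : s ≤ 1) : ∑' n, a n * s ^ n ≤ 1 :=
  hasSum_le (fun n => mul_le_of_le_one_right (ha n) (pow_le_one₀ h0 h1))
    (hsum.summable.mul_pow_of_nonneg ha h0 h1 fun n => n).hasSum hsum

lemma le_tsum_mul_pow {a : ℕ → ℝ} (ha : ∀ n, 0 ≤ a n) (hsum : HasSum a 1) {s : ℝ}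
    (h0 : 0 ≤ s) (h1 : s ≤ 1) : a 0 ≤ ∑' n, a n * s ^ n := by
  simpa using (hsum.summable.mul_pow_of_nonneg ha h0 h1 fun n => n).le_tsum 0
    fun n _ => mul_nonneg (ha n) (pow_nonneg h0 n)

section PowerSeries

variable {a : ℕ → ℝ} {s : ℝ}

lemma hasSum_one_sub_mul_sum_range_one_sub_pow (ha : ∀ n, 0 ≤ a n) (hsum : HasSum a 1)
    (hμ : HasSum (fun n : ℕ => n * a n) 1) (h0 : 0 ≤ s) (h1 : s ≤ 1) :
    HasSum (fun n => (1 - s) * (a n * ∑ k ∈ range n, (1 - s ^ k))) (∑' n, a n * s ^ n - s) := by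
  rw [show ∑' n, a n * s ^ n - s = (1 - s) * 1 - (1 - ∑' n, a n * s ^ n) by ring]
  refine ((hμ.mul_left (1 - s)).sub
    (hsum.sub (hsum.summable.mul_pow_of_nonneg ha h0 h1 fun n => n).hasSum)).congr_fun fun n => ?_
  simp only [sum_sub_distrib, sum_const, card_range, nsmul_eq_mul, mul_one]
  linear_combination (-a n) * mul_neg_geom_sum s n

lemma hasSum_mul_one_sub_pow_pred (ha : ∀ n, 0 ≤ a n) (hμ : HasSum (fun n : ℕ => n * a n) 1)
    (h0 : 0 ≤ s) (h1 : s ≤ 1) :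
    HasSum (fun n : ℕ => n * a n * (1 - s ^ (n - 1))) (1 - ∑' n : ℕ, n * a n * s ^ (n - 1)) := by
  have hD := hμ.summable.mul_pow_of_nonneg (fun n => mul_nonneg n.cast_nonneg (ha n)) h0 h1 (· - 1)
  exact (hμ.sub hD.hasSum).congr_fun fun n => by ring

lemma tsum_mul_pow_sub_le (ha : ∀ n, 0 ≤ a n) (hsum : HasSum a 1)
    (hμ : HasSum (fun n : ℕ => n * a n) 1) (h0 : 0 ≤ s) (h1 : s ≤ 1) :
    ∑' n, a n * s ^ n - s ≤ (1 - s) * (1 - ∑' n : ℕ, n * a n * s ^ (n - 1)) := by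
  refine hasSum_le (fun n => ?_) (hasSum_one_sub_mul_sum_range_one_sub_pow ha hsum hμ h0 h1)
    ((hasSum_mul_one_sub_pow_pred ha hμ h0 h1).mul_left (1 - s))
  have := mul_le_mul_of_nonneg_left (sum_range_one_sub_pow_le h0 h1 n) (ha n)
  exact mul_le_mul_of_nonneg_left (by linarith) (sub_nonneg.2 h1)

lemma mul_one_sub_tsum_le (ha : ∀ n, 0 ≤ a n) (hsum : HasSum a 1)
    (hμ : HasSum (fun n : ℕ => n * a n) 1) (h0 : 0 ≤ s) (h1 : s ≤ 1) :
    (1 - s) * (1 - ∑' n : ℕ, n * a n * s ^ (n - 1)) ≤ 2 * (∑' n, a n * s ^ n - s) := by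
  refine hasSum_le (fun n => ?_) ((hasSum_mul_one_sub_pow_pred ha hμ h0 h1).mul_left (1 - s))
    ((hasSum_one_sub_mul_sum_range_one_sub_pow ha hsum hμ h0 h1).mul_left 2)
  have := mul_le_mul_of_nonneg_left (mul_one_sub_pow_le_two_mul_sum h0 h1 n) (ha n)
  have := mul_le_mul_of_nonneg_left this (sub_nonneg.2 h1)
  linarith

end PowerSeries

lemma exists_forall_Ioo_of_eventually_nhdsLT_one {P : ℝ → Prop} (h : ∀ᶠ t in 𝓝[<] 1, P t) :
    ∃ t₀, 0 < t₀ ∧ t₀ < 1 ∧ ∀ t, t₀ < t → t < 1 → P t := by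
  obtain ⟨l, hl, hsub⟩ := mem_nhdsLT_iff_exists_Ioo_subset.1 h
  refine ⟨max l (1 / 2), by positivity, max_lt hl (by norm_num), fun t ht ht1 => hsub ⟨?_, ht1⟩⟩
  exact (le_max_left _ _).trans_lt ht

lemma one_sub_rpow_bounds_of_eq_mul {t s G D a₀ c₁ c₂ β : ℝ} (ht1 : t ≤ 1) (hs1 : s < 1)
    (hc₁ : 0 < c₁) (hc₂ : 0 < c₂) (hs : s = t * G) (hG0 : a₀ ≤ G) (hG1 : G ≤ 1)
    (hGD : G - s ≤ (1 - s) * D) (hDG : (1 - s) * D ≤ 2 * (G - s))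
    (hD1 : c₁ * (1 - s) ^ β ≤ D) (hD2 : D ≤ c₂ * (1 - s) ^ β) :
    a₀ / c₂ * (1 - t) ≤ (1 - s) ^ (1 + β) ∧ (1 - s) ^ (1 + β) ≤ 2 / c₁ * (1 - t) := by
  have hs0 : 0 ≤ 1 - s := by linarith
  have hGs : G - s = (1 - t) * G := by rw [hs]; ring
  have hlo := mul_le_mul_of_nonneg_left hG0 (sub_nonneg.2 ht1)
  have hhi := mul_le_mul_of_nonneg_left hG1 (sub_nonneg.2 ht1)
  have hD1' := mul_le_mul_of_nonneg_left hD1 hs0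
  have hD2' := mul_le_mul_of_nonneg_left hD2 hs0
  rw [Real.rpow_add (by linarith), Real.rpow_one, div_mul_eq_mul_div, div_mul_eq_mul_div,
    div_le_iff₀ hc₂, le_div_iff₀ hc₁]
  constructor <;> linarith

theorem eventually_one_sub_rpow_bounds {a : ℕ → ℝ} (ha : ∀ n, 0 ≤ a n) (hsum : HasSum a 1)
    (hμ : HasSum (fun n : ℕ => n * a n) 1) {β c₁ c₂ : ℝ} (hβ : 0 < β) (hc₁ : 0 < c₁)
    (hc₂ : 0 < c₂)
    (hG' : ∀ᶠ x in 𝓝[<] 1, c₁ * (1 - x) ^ β ≤ 1 - ∑' n : ℕ, n * a n * x ^ (n - 1) ∧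
      1 - ∑' n : ℕ, n * a n * x ^ (n - 1) ≤ c₂ * (1 - x) ^ β)
    {F : ℝ → ℝ} (hF : Tendsto F (𝓝[<] 1) (𝓝 1))
    (hFeq : ∀ᶠ t in 𝓝[<] 1, 0 ≤ F t ∧ F t ≤ 1 ∧ F t = t * ∑' n, a n * F t ^ n) :
    ∀ᶠ t in 𝓝[<] 1, (a 0 / c₂) ^ (1 / (1 + β)) * (1 - t) ^ (1 / (1 + β)) ≤ 1 - F t ∧
      1 - F t ≤ (2 / c₁) ^ (1 / (1 + β)) * (1 - t) ^ (1 / (1 + β)) := by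
  have hunit : ∀ᶠ t : ℝ in 𝓝[<] 1, 0 < t ∧ t < 1 := Ioo_mem_nhdsLT zero_lt_one
  have hFlt : ∀ᶠ t in 𝓝[<] 1, F t < 1 := by
    filter_upwards [hFeq, hunit] with t ⟨h0, h1, heq⟩ ⟨ht0, ht1⟩
    rw [heq]
    exact (mul_le_of_le_one_right ht0.le (tsum_mul_pow_le_one ha hsum h0 h1)).trans_lt ht1
  have hFT : Tendsto F (𝓝[<] 1) (𝓝[<] 1) := tendsto_nhdsWithin_iff.2 ⟨hF, hFlt⟩
  filter_upwards [hFeq, hFT.eventually hG', hunit, hFlt]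
    with t ⟨h0, h1, heq⟩ ⟨hD1, hD2⟩ ⟨ht0, ht1⟩ hs1
  obtain ⟨hlo, hhi⟩ := one_sub_rpow_bounds_of_eq_mul ht1.le hs1 hc₁ hc₂ heq
    (le_tsum_mul_pow ha hsum h0 h1) (tsum_mul_pow_le_one ha hsum h0 h1)
    (tsum_mul_pow_sub_le ha hsum hμ h0 h1) (mul_one_sub_tsum_le ha hsum hμ h0 h1) hD1 hD2
  have hβ' : 0 < 1 + β := by linarith
  have ha₀ : 0 ≤ a 0 / c₂ := div_nonneg (ha 0) hc₂.le
  rw [← Real.mul_rpow ha₀ (by linarith), ← Real.mul_rpow (by positivity) (by linarith), one_div]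
  exact ⟨(Real.rpow_inv_le_iff_of_pos (mul_nonneg ha₀ (by linarith)) (by linarith) hβ').2 hlo,
    (Real.le_rpow_inv_iff_of_pos (by linarith) (by positivity) hβ').2 hhi⟩

section Moments

variable {f : ℕ → ℝ}

lemma one_sub_tsum_mul_pow (hf : HasSum f 1) {t : ℝ} (hs : Summable fun n => f n * t ^ n) :
    1 - ∑' n, f n * t ^ n = ∑' n, f n * (1 - t ^ n) := by
  rw [← (hf.sub hs.hasSum).tsum_eq]
  exact tsum_congr fun n => by ring

lemma tsum_nat_add_mul_one_sub_pow_le (hf : ∀ n, 0 ≤ f n) (hsf : Summable f) {t : ℝ}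
    (h0 : 0 ≤ t) (h1 : t ≤ 1) (n : ℕ) :
    (∑' k, f (k + n)) * (1 - t ^ n) ≤ ∑' k, f k * (1 - t ^ k) := by
  have hw0 : ∀ k, 0 ≤ f k * (1 - t ^ k) := fun k =>
    mul_nonneg (hf k) (sub_nonneg.2 (pow_le_one₀ h0 h1))
  have hw : Summable fun k => f k * (1 - t ^ k) :=
    hsf.of_nonneg_of_le hw0 fun k => mul_le_of_le_one_right (hf k) (by linarith [pow_nonneg h0 k])
  rw [← tsum_mul_right]
  calc ∑' k, f (k + n) * (1 - t ^ n) ≤ ∑' k, f (k + n) * (1 - t ^ (k + n)) :=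
        Summable.tsum_le_tsum (fun k => mul_le_mul_of_nonneg_left
          (sub_le_sub_left (pow_le_pow_of_le_one h0 h1 (Nat.le_add_left n k)) 1) (hf _))
          (((summable_nat_add_iff n).2 hsf).mul_right _) ((summable_nat_add_iff n).2 hw)
    _ ≤ ∑' k, f k * (1 - t ^ k) := by
        rw [← hw.sum_add_tsum_nat_add n]
        exact le_add_of_nonneg_left (sum_nonneg fun k _ => hw0 k)

lemma eventually_tsum_nat_add_le (hf : ∀ n, 0 ≤ f n) (hsf : Summable f) {γ C : ℝ}
    (h : ∀ᶠ t in 𝓝[<] 1, ∑' k, f k * (1 - t ^ k) ≤ C * (1 - t) ^ γ) :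
    ∀ᶠ n : ℕ in atTop, ∑' k, f (k + n) ≤ 2 * C * (n : ℝ) ^ (-γ) := by
  have hlim : Tendsto (fun n : ℕ => 1 - 1 / (n : ℝ)) atTop (𝓝[<] 1) := by
    refine tendsto_nhdsWithin_iff.2 ⟨?_, ?_⟩
    · simpa using tendsto_const_nhds.sub (tendsto_one_div_atTop_nhds_zero_nat (𝕜 := ℝ))
    · filter_upwards [eventually_gt_atTop 0] with n hn
      simpa using hn
  filter_upwards [hlim.eventually h, eventually_ge_atTop 1] with n hn hn1
  have hn1' : (1 : ℝ) ≤ n := by exact_mod_cast hn1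
  have ht0 : 0 ≤ 1 - 1 / (n : ℝ) := by
    rw [sub_nonneg, div_le_one (by positivity)]; exact hn1'
  have hhalf : (1 - 1 / (n : ℝ)) ^ n ≤ 1 / 2 := by
    refine (Real.one_sub_div_pow_le_exp_neg hn1').trans ?_
    rw [Real.exp_neg, one_div]
    exact inv_anti₀ two_pos (by linarith [Real.add_one_lt_exp one_ne_zero])
  have htail := tsum_nat_add_mul_one_sub_pow_le hf hsf ht0 (by simp) n
  have hT : 0 ≤ ∑' k, f (k + n) := tsum_nonneg fun k => hf _
  have hpow : (1 - (1 - 1 / (n : ℝ))) ^ γ = (n : ℝ) ^ (-γ) := by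
    rw [sub_sub_cancel, one_div, Real.inv_rpow n.cast_nonneg, Real.rpow_neg n.cast_nonneg]
  rw [hpow] at hn
  nlinarith

lemma sum_Ico_mul_rpow_le (hf : ∀ n, 0 ≤ f n) (hsf : Summable f) {α : ℝ} (hα : 0 ≤ α)
    (n m : ℕ) : ∑ k ∈ Ico n m, f k * (k : ℝ) ^ α ≤ (m : ℝ) ^ α * ∑' k, f (k + n) := by
  calc ∑ k ∈ Ico n m, f k * (k : ℝ) ^ α ≤ ∑ k ∈ Ico n m, f k * (m : ℝ) ^ α :=
        sum_le_sum fun k hk => mul_le_mul_of_nonneg_left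
          (Real.rpow_le_rpow k.cast_nonneg (by exact_mod_cast (mem_Ico.1 hk).2.le) hα) (hf k)
    _ = (m : ℝ) ^ α * ∑ k ∈ range (m - n), f (k + n) := by
        rw [← sum_mul, mul_comm, sum_Ico_eq_sum_range]
        simp only [add_comm n]
    _ ≤ (m : ℝ) ^ α * ∑' k, f (k + n) :=
        mul_le_mul_of_nonneg_left (((summable_nat_add_iff n).2 hsf).sum_le_tsum _
          fun k _ => hf _) (by positivity)

lemma sum_range_two_pow {M : Type*} [AddCommMonoid M] (g : ℕ → M) (n : ℕ) :
    ∑ k ∈ range (2 ^ n), g k = g 0 + ∑ j ∈ range n, ∑ k ∈ Ico (2 ^ j) (2 ^ (j + 1)), g k := by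
  induction n with
  | zero => simp
  | succ n ih =>
    rw [sum_range_succ, ← add_assoc, ← ih, range_eq_Ico, range_eq_Ico,
      sum_Ico_consecutive _ (Nat.zero_le _) (Nat.pow_le_pow_right two_pos n.le_succ)]

lemma summable_of_summable_sum_Ico_two_pow {g : ℕ → ℝ} (hg : ∀ n, 0 ≤ g n)
    (h : Summable fun j => ∑ k ∈ Ico (2 ^ j) (2 ^ (j + 1)), g k) : Summable g := by
  refine summable_of_sum_range_le hg (c := g 0 + ∑' j, ∑ k ∈ Ico (2 ^ j) (2 ^ (j + 1)), g k)
    fun n => ?_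
  calc ∑ k ∈ range n, g k ≤ ∑ k ∈ range (2 ^ n), g k :=
        sum_le_sum_of_subset_of_nonneg (range_subset_range.2 n.lt_two_pow_self.le)
          fun k _ _ => hg k
    _ = g 0 + ∑ j ∈ range n, ∑ k ∈ Ico (2 ^ j) (2 ^ (j + 1)), g k := sum_range_two_pow g n
    _ ≤ _ := by gcongr; exact h.sum_le_tsum _ fun j _ => sum_nonneg fun k _ => hg k

lemma summable_mul_rpow_of_tsum_nat_add_le (hf : ∀ n, 0 ≤ f n) (hsf : Summable f)
    {α γ C : ℝ} (hα : 0 ≤ α) (hαγ : α < γ)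
    (h : ∀ᶠ n : ℕ in atTop, ∑' k, f (k + n) ≤ C * (n : ℝ) ^ (-γ)) :
    Summable fun n => f n * (n : ℝ) ^ α := by
  refine summable_of_summable_sum_Ico_two_pow (fun n => mul_nonneg (hf n) (by positivity)) ?_
  have hgeom : Summable fun j : ℕ => 2 ^ α * C * ((2 : ℝ) ^ (α - γ)) ^ j :=
    (summable_geometric_of_lt_one (by positivity)
      (Real.rpow_lt_one_of_one_lt_of_neg one_lt_two (by linarith))).mul_left _
  refine hgeom.of_norm_bounded_eventually_nat ?_
  filter_upwards [(tendsto_pow_atTop_atTop_of_one_lt one_lt_two).eventually h] with j hj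
  rw [Real.norm_of_nonneg (sum_nonneg fun k _ => mul_nonneg (hf k) (by positivity))]
  calc ∑ k ∈ Ico (2 ^ j) (2 ^ (j + 1)), f k * (k : ℝ) ^ α
      ≤ ((2 ^ (j + 1) : ℕ) : ℝ) ^ α * ∑' k, f (k + 2 ^ j) := sum_Ico_mul_rpow_le hf hsf hα _ _
    _ ≤ ((2 ^ (j + 1) : ℕ) : ℝ) ^ α * (C * ((2 ^ j : ℕ) : ℝ) ^ (-γ)) :=
        mul_le_mul_of_nonneg_left hj (by positivity)
    _ = 2 ^ α * C * ((2 : ℝ) ^ (α - γ)) ^ j := by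
        rw [Nat.cast_pow, Nat.cast_pow, Nat.cast_ofNat, pow_succ,
          Real.mul_rpow (by positivity) zero_le_two, ← Real.rpow_pow_comm zero_le_two,
          ← Real.rpow_pow_comm zero_le_two, sub_eq_add_neg,
          Real.rpow_add two_pos, mul_pow]
        ring

lemma tendsto_tsum_mul_one_sub_pow_div_rpow (hf : ∀ n, 0 ≤ f n) {γ : ℝ} (hγ0 : 0 ≤ γ)
    (hγ1 : γ < 1) (hs : Summable fun n => f n * (n : ℝ) ^ γ) :
    Tendsto (fun t => (∑' k, f k * (1 - t ^ k)) / (1 - t) ^ γ) (𝓝[<] 1) (𝓝 0) := by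
  have hunit : ∀ᶠ t : ℝ in 𝓝[<] 1, 0 < t ∧ t < 1 := Ioo_mem_nhdsLT zero_lt_one
  simp_rw [← tsum_div_const]
  rw [← tsum_zero]
  refine tendsto_tsum_of_dominated_convergence hs (fun k => ?_) ?_
  · have hlim : Tendsto (fun t : ℝ => f k * k * (1 - t) ^ (1 - γ)) (𝓝[<] 1) (𝓝 0) := by
      have : ContinuousAt (fun t : ℝ => f k * k * (1 - t) ^ (1 - γ)) 1 :=
        continuousAt_const.mul ((Real.continuousAt_rpow_const _ _ (Or.inr (by linarith))).comp
          (continuousAt_const.sub continuousAt_id))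
      simpa [Real.zero_rpow (by linarith : (1 - γ) ≠ 0)] using this.tendsto.mono_left
        nhdsWithin_le_nhds
    refine tendsto_of_tendsto_of_tendsto_of_le_of_le' tendsto_const_nhds hlim ?_ ?_
    · filter_upwards [hunit] with t ⟨ht0, ht1⟩
      exact div_nonneg (mul_nonneg (hf k) (sub_nonneg.2 (pow_le_one₀ ht0.le ht1.le)))
        (by positivity)
    · filter_upwards [hunit] with t ⟨ht0, ht1⟩
      have h1t : 0 < 1 - t := by linarith
      rw [Real.rpow_sub h1t, Real.rpow_one, div_le_iff₀ (by positivity)]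
      calc f k * (1 - t ^ k) ≤ f k * (k * (1 - t)) :=
            mul_le_mul_of_nonneg_left (one_sub_pow_le_mul_one_sub ht0.le k) (hf k)
        _ = f k * k * ((1 - t) / (1 - t) ^ γ) * (1 - t) ^ γ := by field_simp
  · filter_upwards [hunit] with t ⟨ht0, ht1⟩ k
    have h1t : 0 < 1 - t := by linarith
    rw [Real.norm_of_nonneg (div_nonneg (mul_nonneg (hf k)
      (sub_nonneg.2 (pow_le_one₀ ht0.le ht1.le))) (by positivity)), div_le_iff₀ (by positivity)]
    calc f k * (1 - t ^ k) ≤ f k * (k * (1 - t)) ^ γ :=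
          mul_le_mul_of_nonneg_left (one_sub_pow_le_rpow ht0.le ht1.le hγ0 hγ1.le k) (hf k)
      _ = f k * (k : ℝ) ^ γ * (1 - t) ^ γ := by
          rw [Real.mul_rpow k.cast_nonneg h1t.le]; ring

lemma not_summable_mul_rpow_of_le_tsum (hf : ∀ n, 0 ≤ f n) {γ c : ℝ} (hγ0 : 0 ≤ γ)
    (hγ1 : γ < 1) (hc : 0 < c)
    (h : ∀ᶠ t in 𝓝[<] 1, c * (1 - t) ^ γ ≤ ∑' k, f k * (1 - t ^ k)) :
    ¬ Summable fun n => f n * (n : ℝ) ^ γ := by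
  intro hs
  have hsmall := (tendsto_order.1 (tendsto_tsum_mul_one_sub_pow_div_rpow hf hγ0 hγ1 hs)).2 c hc
  obtain ⟨t, hlt, hle, ht1⟩ := (hsmall.and (h.and self_mem_nhdsWithin)).exists
  rw [div_lt_iff₀ (Real.rpow_pos_of_pos (sub_pos.2 ht1) γ)] at hlt
  linarith

theorem summable_mul_rpow_iff_lt (hf : ∀ n, 0 ≤ f n) (hsf : Summable f) {γ c₁ c₂ : ℝ}
    (hγ0 : 0 < γ) (hγ1 : γ < 1) (hc₁ : 0 < c₁)
    (h : ∀ᶠ t in 𝓝[<] 1, c₁ * (1 - t) ^ γ ≤ ∑' k, f k * (1 - t ^ k) ∧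
      ∑' k, f k * (1 - t ^ k) ≤ c₂ * (1 - t) ^ γ)
    {α : ℝ} (hα : 0 ≤ α) : (Summable fun n => f n * (n : ℝ) ^ α) ↔ α < γ := by
  refine ⟨fun hs => ?_, fun hαγ => summable_mul_rpow_of_tsum_nat_add_le hf hsf hα hαγ
    (eventually_tsum_nat_add_le hf hsf (h.mono fun t ht => ht.2))⟩
  by_contra! hγα
  refine not_summable_mul_rpow_of_le_tsum hf hγ0.le hγ1 hc₁ (h.mono fun t ht => ht.1)
    (hs.of_nonneg_of_le (fun n => mul_nonneg (hf n) (by positivity)) fun n => ?_)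
  refine mul_le_mul_of_nonneg_left ?_ (hf n)
  rcases n.eq_zero_or_pos with rfl | hn
  · rw [Nat.cast_zero, Real.zero_rpow hγ0.ne']
    exact Real.rpow_nonneg le_rfl α
  · exact Real.rpow_le_rpow_of_exponent_le (by exact_mod_cast hn) hγα

end Moments

theorem stmt_14_general (a : ℕ → ℝ) (ha : ∀ n, 0 ≤ a n) (ha0 : 0 < a 0)
    (hsum : ∑' n, a n = 1) (hμ : ∑' n : ℕ, (n : ℝ) * a n = 1)
    (β : ℝ) (hβ0 : 0 < β)
    (hG' : ∃ c₁ c₂ x₁ : ℝ, 0 < c₁ ∧ c₁ < c₂ ∧ 0 < x₁ ∧ x₁ < 1 ∧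
      ∀ x : ℝ, x₁ < x → x < 1 →
        c₁ * (1 - x) ^ β ≤ 1 - ∑' n : ℕ, (n : ℝ) * a n * x ^ (n - 1) ∧
        1 - ∑' n : ℕ, (n : ℝ) * a n * x ^ (n - 1) ≤ c₂ * (1 - x) ^ β)
    (f : ℕ → ℝ) (hf : ∀ n, 0 ≤ f n) (hfsum : ∑' n, f n = 1)
    (hFeq : ∀ t : ℝ, 0 < t → t < 1 →
      ∑' n : ℕ, f n * t ^ n = t * ∑' n : ℕ, a n * (∑' m : ℕ, f m * t ^ m) ^ n) :
    (∃ c₁' c₂' t₀ : ℝ, 0 < c₁' ∧ c₁' < c₂' ∧ 0 < t₀ ∧ t₀ < 1 ∧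
      ∀ t : ℝ, t₀ < t → t < 1 →
        c₁' * (1 - t) ^ (1 / (1 + β)) ≤ 1 - ∑' n : ℕ, f n * t ^ n ∧
        1 - ∑' n : ℕ, f n * t ^ n ≤ c₂' * (1 - t) ^ (1 / (1 + β))) ∧
    (∀ α : ℝ, 0 < α → α < 1 →
      (Summable (fun n : ℕ => f n * (n : ℝ) ^ α) ↔ α < 1 / (1 + β))) := by
  obtain ⟨c₁, c₂, x₁, hc₁, hc₁₂, -, hx₁, hG'⟩ := hG'
  have hc₂ : 0 < c₂ := hc₁.trans hc₁₂
  have ha1 : a 0 ≤ 1 := hsum ▸ (hasSum_of_tsum_eq_one hsum).summable.le_tsum 0 fun n _ => ha n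
  have hfsum := hasSum_of_tsum_eq_one hfsum
  have hunit : ∀ᶠ t : ℝ in 𝓝[<] 1, 0 < t ∧ t < 1 := Ioo_mem_nhdsLT zero_lt_one
  have hbounds := eventually_one_sub_rpow_bounds ha (hasSum_of_tsum_eq_one hsum)
    (hasSum_of_tsum_eq_one hμ) hβ0 hc₁ hc₂
    (by filter_upwards [Ioo_mem_nhdsLT hx₁] with x hx using hG' x hx.1 hx.2)
    (Real.tendsto_tsum_powerSeries_nhdsWithin_lt hfsum.tendsto_sum_nat)
    (by filter_upwards [hunit] with t ⟨ht0, ht1⟩ using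
      ⟨tsum_nonneg fun n => mul_nonneg (hf n) (by positivity),
        tsum_mul_pow_le_one hf hfsum ht0.le ht1.le, hFeq t ht0 ht1⟩)
  have hc₁' : 0 < (a 0 / c₂) ^ (1 / (1 + β)) := Real.rpow_pos_of_pos (div_pos ha0 hc₂) _
  refine ⟨?_, fun α hα _ => ?_⟩
  · obtain ⟨t₀, ht₀0, ht₀1, h⟩ := exists_forall_Ioo_of_eventually_nhdsLT_one hbounds
    refine ⟨_, _, t₀, hc₁', Real.rpow_lt_rpow (div_pos ha0 hc₂).le ?_ (by positivity), ht₀0,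
      ht₀1, h⟩
    rw [div_lt_div_iff₀ hc₂ hc₁]
    nlinarith
  · refine summable_mul_rpow_iff_lt (c₂ := (2 / c₁) ^ (1 / (1 + β))) hf hfsum.summable
      (by positivity) ((div_lt_one (by linarith)).2 (by linarith)) hc₁' ?_ hα.le
    filter_upwards [hbounds, hunit] with t ht ⟨ht0, ht1⟩
    rwa [← one_sub_tsum_mul_pow hfsum (hfsum.summable.mul_pow_of_nonneg hf ht0.le ht1.le _)]

theorem stmt_14 (a : ℕ → ℝ) (ha : ∀ n, 0 ≤ a n) (ha0 : 0 < a 0)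
    (ha01 : a 0 + a 1 < 1)
    (hsum : ∑' n, a n = 1) (hμ : ∑' n : ℕ, (n : ℝ) * a n = 1)
    (β : ℝ) (hβ0 : 0 < β) (hβ1 : β < 1)
    (hG' : ∃ c₁ c₂ x₁ : ℝ, 0 < c₁ ∧ c₁ < c₂ ∧ 0 < x₁ ∧ x₁ < 1 ∧
      ∀ x : ℝ, x₁ < x → x < 1 →
        c₁ * (1 - x) ^ β ≤ 1 - ∑' n : ℕ, (n : ℝ) * a n * x ^ (n - 1) ∧
        1 - ∑' n : ℕ, (n : ℝ) * a n * x ^ (n - 1) ≤ c₂ * (1 - x) ^ β)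
    (f : ℕ → ℝ) (hf : ∀ n, 0 ≤ f n) (hf0 : f 0 = 0) (hfsum : ∑' n, f n = 1)
    (hFeq : ∀ t : ℝ, 0 < t → t < 1 →
      ∑' n : ℕ, f n * t ^ n = t * ∑' n : ℕ, a n * (∑' m : ℕ, f m * t ^ m) ^ n) :
    (∃ c₁' c₂' t₀ : ℝ, 0 < c₁' ∧ c₁' < c₂' ∧ 0 < t₀ ∧ t₀ < 1 ∧
      ∀ t : ℝ, t₀ < t → t < 1 →
        c₁' * (1 - t) ^ (1 / (1 + β)) ≤ 1 - ∑' n : ℕ, f n * t ^ n ∧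
        1 - ∑' n : ℕ, f n * t ^ n ≤ c₂' * (1 - t) ^ (1 / (1 + β))) ∧
    (∀ α : ℝ, 0 < α → α < 1 →
      (Summable (fun n : ℕ => f n * (n : ℝ) ^ α) ↔ α < 1 / (1 + β))) :=
  stmt_14_general a ha ha0 hsum hμ β hβ0 hG' f hf hfsum hFeq
end

section
/- Let (a_n)_{n≥0} be nonnegative reals with a_0 > 0, a_0 + a_1 < 1, ∑_{n=0}^∞ a_n = 1, and μ := ∑_{n=1}^∞ n a_n < 1. Let G(t) = ∑_{n=0}^∞ a_n t^n and G'(t) = ∑_{n=1}^∞ n a_n t^{n−1}. Suppose there exists x₁ ≥ 0 with G'(x₁) < ∞ and G(x₁) ≤ x₁·G'(x₁). Then there exists a unique x₀ ≥ 0 with G'(x₀) < ∞ and G(x₀) = x₀·G'(x₀); it satisfies x₀ > 1 and x₀/G(x₀) > 1. Moreover, for every x ≥ 0 with G(x) < ∞ one has x/G(x) ≤ x₀/G(x₀), and x₀ is the least nonnegative solution of x = (x₀/G(x₀))·G(x). -/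
/-!
Let `E(x) = x G'(x) - G(x) = ∑ (n - 1) aₙ xⁿ`. Since `a₀ + a₁ < 1`, some `aₘ` with `m ≥ 2` is
positive, so `G` is strictly convex and `E` is strictly increasing. As `E(1) = μ - 1 < 0 ≤ E(x₁)`,
`E` has a unique zero `x₀ ∈ (1, x₁]`. The tangent to `G` at `x₀` passes through the origin, and
`G` lies strictly above it away from `x₀`: `x G'(x₀) < G(x)` for `x ≠ x₀`. Since
`G'(x₀) = G(x₀) / x₀`, this is `x / G(x) < x₀ / G(x₀)`; at `x = 1` it gives `x₀ / G(x₀) > 1`.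
-/

open Set

theorem pow_add_mul_sub_le_pow {t x : ℝ} (ht : 0 ≤ t) (hx : 0 ≤ x) (n : ℕ) :
    t ^ n + n * t ^ (n - 1) * (x - t) ≤ x ^ n := by
  simpa using pow_add_mul_le_add_pow ht (b := x - t) (by linarith) n

theorem pow_add_mul_sub_lt_pow {t x : ℝ} (ht : 0 < t) (hx : 0 ≤ x) (hxt : x ≠ t) {n : ℕ}
    (hn : 2 ≤ n) : t ^ n + n * t ^ (n - 1) * (x - t) < x ^ n := by
  obtain ⟨k, rfl⟩ := Nat.exists_eq_add_of_le' hn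
  have hpos : 0 < ((k : ℝ) + 1) * t ^ k * (x - t) ^ 2 := by
    have := sub_ne_zero.mpr hxt
    positivity
  -- one step of the recursion `x ^ (k + 2) = x * x ^ (k + 1)` gains the term `(k + 1) t^k (x - t)²`
  calc t ^ (k + 2) + ↑(k + 2) * t ^ (k + 2 - 1) * (x - t)
      = x * (t ^ (k + 1) + ↑(k + 1) * t ^ (k + 1 - 1) * (x - t))
          - ((k : ℝ) + 1) * t ^ k * (x - t) ^ 2 := by
        simp only [Nat.add_sub_cancel, Nat.cast_add, pow_succ]; push_cast; ring
    _ < x * (t ^ (k + 1) + ↑(k + 1) * t ^ (k + 1 - 1) * (x - t)) := by linarith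
    _ ≤ x * x ^ (k + 1) := mul_le_mul_of_nonneg_left (pow_add_mul_sub_le_pow ht.le hx _) hx
    _ = x ^ (k + 2) := by ring

noncomputable def genFun (a : ℕ → ℝ) (x : ℝ) : ℝ := ∑' n, a n * x ^ n

noncomputable def genFunDeriv (a : ℕ → ℝ) (x : ℝ) : ℝ :=
  ∑' n : ℕ, (n : ℝ) * a n * x ^ (n - 1)

section PowerSeries

variable {c : ℕ → ℝ} {k : ℕ → ℕ} {x y : ℝ}

theorem summable_mul_pow_of_le (hc : ∀ n, 0 ≤ c n) (hx : 0 ≤ x) (hxy : x ≤ y)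
    (hy : Summable fun n => c n * y ^ k n) : Summable fun n => c n * x ^ k n :=
  hy.of_nonneg_of_le (fun n => mul_nonneg (hc n) (pow_nonneg hx _))
    (fun n => mul_le_mul_of_nonneg_left (pow_le_pow_left₀ hx hxy _) (hc n))

theorem tsum_mul_pow_le_of_le (hc : ∀ n, 0 ≤ c n) (hx : 0 ≤ x) (hxy : x ≤ y)
    (hy : Summable fun n => c n * y ^ k n) :
    ∑' n, c n * x ^ k n ≤ ∑' n, c n * y ^ k n :=
  (summable_mul_pow_of_le hc hx hxy hy).tsum_le_tsum
    (fun n => mul_le_mul_of_nonneg_left (pow_le_pow_left₀ hx hxy _) (hc n)) hy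

theorem continuousOn_tsum_mul_pow (hc : ∀ n, 0 ≤ c n) {r : ℝ}
    (hr : Summable fun n => c n * r ^ k n) :
    ContinuousOn (fun x => ∑' n, c n * x ^ k n) (Icc 0 r) := by
  refine continuousOn_tsum (fun n => (continuous_const.mul (continuous_pow _)).continuousOn) hr
    fun n x ⟨hx0, hxr⟩ => ?_
  rw [Real.norm_eq_abs, abs_of_nonneg (mul_nonneg (hc n) (pow_nonneg hx0 _))]
  exact mul_le_mul_of_nonneg_left (pow_le_pow_left₀ hx0 hxr _) (hc n)

end PowerSeries

section GeneratingFunction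

variable {a : ℕ → ℝ} {t x y : ℝ}

theorem summable_mul_pow_of_summable_deriv (ha : ∀ n, 0 ≤ a n) (hx : 0 ≤ x)
    (hd : Summable fun n : ℕ => (n : ℝ) * a n * x ^ (n - 1)) :
    Summable fun n => a n * x ^ n := by
  rw [← summable_nat_add_iff 1]
  refine ((summable_nat_add_iff 1).mpr (hd.mul_left x)).of_nonneg_of_le
    (fun n => mul_nonneg (ha _) (pow_nonneg hx _)) fun n => ?_
  have h1 : (1 : ℝ) ≤ n + 1 := by linarith [n.cast_nonneg (α := ℝ)]
  calc a (n + 1) * x ^ (n + 1) = 1 * a (n + 1) * x ^ (n + 1) := by ring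
    _ ≤ (n + 1) * a (n + 1) * x ^ (n + 1) := by gcongr; exact ha _
    _ = x * (↑(n + 1) * a (n + 1) * x ^ (n + 1 - 1)) := by
      rw [Nat.add_sub_cancel]; push_cast; ring

theorem hasSum_tangent (ha : ∀ n, 0 ≤ a n) (ht : 0 ≤ t)
    (hdt : Summable fun n : ℕ => (n : ℝ) * a n * t ^ (n - 1)) :
    HasSum (fun n : ℕ => a n * t ^ n + (x - t) * ((n : ℝ) * a n * t ^ (n - 1)))
      (genFun a t + (x - t) * genFunDeriv a t) :=
  (summable_mul_pow_of_summable_deriv ha ht hdt).hasSum.add (hdt.hasSum.mul_left (x - t))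

theorem genFun_add_mul_genFunDeriv_le (ha : ∀ n, 0 ≤ a n) (ht : 0 ≤ t) (hx : 0 ≤ x)
    (hdt : Summable fun n : ℕ => (n : ℝ) * a n * t ^ (n - 1))
    (hgx : Summable fun n => a n * x ^ n) :
    genFun a t + (x - t) * genFunDeriv a t ≤ genFun a x :=
  hasSum_le (fun n => by
      have := mul_le_mul_of_nonneg_left (pow_add_mul_sub_le_pow ht hx n) (ha n)
      linarith)
    (hasSum_tangent ha ht hdt) hgx.hasSum

theorem genFun_add_mul_genFunDeriv_lt {m : ℕ} (ha : ∀ n, 0 ≤ a n) (hm : 2 ≤ m) (ham : 0 < a m)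
    (ht : 0 < t) (hx : 0 ≤ x) (hxt : x ≠ t)
    (hdt : Summable fun n : ℕ => (n : ℝ) * a n * t ^ (n - 1))
    (hgx : Summable fun n => a n * x ^ n) :
    genFun a t + (x - t) * genFunDeriv a t < genFun a x :=
  hasSum_lt (fun n => by
      have := mul_le_mul_of_nonneg_left (pow_add_mul_sub_le_pow ht.le hx n) (ha n)
      linarith)
    (by
      have := mul_lt_mul_of_pos_left (pow_add_mul_sub_lt_pow ht hx hxt hm) ham
      linarith)
    (hasSum_tangent ha ht.le hdt) hgx.hasSum

theorem mul_genFunDeriv_sub_genFun_lt {m : ℕ} (ha : ∀ n, 0 ≤ a n) (hm : 2 ≤ m) (ham : 0 < a m)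
    (hx : 0 ≤ x) (hxy : x < y) (hdy : Summable fun n : ℕ => (n : ℝ) * a n * y ^ (n - 1)) :
    x * genFunDeriv a x - genFun a x < y * genFunDeriv a y - genFun a y := by
  have hdx := summable_mul_pow_of_le (fun n => mul_nonneg n.cast_nonneg (ha n)) hx hxy.le hdy
  have htangent := genFun_add_mul_genFunDeriv_lt ha hm ham (hx.trans_lt hxy) hx hxy.ne hdy
    (summable_mul_pow_of_summable_deriv ha hx hdx)
  have hmono : x * genFunDeriv a x ≤ x * genFunDeriv a y :=
    mul_le_mul_of_nonneg_left
      (tsum_mul_pow_le_of_le (fun n => mul_nonneg n.cast_nonneg (ha n)) hx hxy.le hdy) hx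
  linarith

theorem continuousOn_mul_genFunDeriv_sub_genFun (ha : ∀ n, 0 ≤ a n) {r : ℝ} (hr : 0 ≤ r)
    (hdr : Summable fun n : ℕ => (n : ℝ) * a n * r ^ (n - 1)) :
    ContinuousOn (fun x => x * genFunDeriv a x - genFun a x) (Icc 0 r) :=
  (continuousOn_id.mul
    (continuousOn_tsum_mul_pow (fun n => mul_nonneg n.cast_nonneg (ha n)) hdr)).sub
    (continuousOn_tsum_mul_pow (k := fun n => n) ha
      (summable_mul_pow_of_summable_deriv ha hr hdr))

theorem exists_genFun_eq_mul_genFunDeriv {m : ℕ} (ha : ∀ n, 0 ≤ a n) (hm : 2 ≤ m)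
    (ham : 0 < a m) {p r : ℝ} (hp : 0 ≤ p) (hr : 0 ≤ r)
    (hdp : Summable fun n : ℕ => (n : ℝ) * a n * p ^ (n - 1))
    (hdr : Summable fun n : ℕ => (n : ℝ) * a n * r ^ (n - 1))
    (hEp : p * genFunDeriv a p - genFun a p < 0) (hEr : 0 ≤ r * genFunDeriv a r - genFun a r) :
    ∃ x₀ ∈ Ioc p r, genFun a x₀ = x₀ * genFunDeriv a x₀ := by
  have hpr : p ≤ r := le_of_not_gt fun hrp =>
    (mul_genFunDeriv_sub_genFun_lt ha hm ham hr hrp hdp).not_ge (hEp.le.trans hEr)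
  obtain ⟨x₀, ⟨hpx₀, hx₀r⟩, hx₀⟩ := intermediate_value_Icc hpr
    ((continuousOn_mul_genFunDeriv_sub_genFun ha hr hdr).mono (Icc_subset_Icc hp le_rfl))
    ⟨hEp.le, hEr⟩
  refine ⟨x₀, ⟨hpx₀.lt_of_ne ?_, hx₀r⟩, (sub_eq_zero.mp hx₀).symm⟩
  rintro rfl
  exact hEp.ne hx₀

theorem eq_of_genFun_eq_mul_genFunDeriv {m : ℕ} (ha : ∀ n, 0 ≤ a n) (hm : 2 ≤ m)
    (ham : 0 < a m) (hx : 0 ≤ x) (hy : 0 ≤ y)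
    (hdx : Summable fun n : ℕ => (n : ℝ) * a n * x ^ (n - 1))
    (hdy : Summable fun n : ℕ => (n : ℝ) * a n * y ^ (n - 1))
    (hEx : genFun a x = x * genFunDeriv a x) (hEy : genFun a y = y * genFunDeriv a y) :
    x = y := by
  rcases lt_trichotomy x y with hxy | hxy | hxy
  · linarith [mul_genFunDeriv_sub_genFun_lt ha hm ham hx hxy hdy]
  · exact hxy
  · linarith [mul_genFunDeriv_sub_genFun_lt ha hm ham hy hxy hdx]

theorem mul_genFunDeriv_le_genFun (ha : ∀ n, 0 ≤ a n) (ht : 0 ≤ t) (hx : 0 ≤ x)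
    (hdt : Summable fun n : ℕ => (n : ℝ) * a n * t ^ (n - 1))
    (hgx : Summable fun n => a n * x ^ n) (hEt : genFun a t = t * genFunDeriv a t) :
    x * genFunDeriv a t ≤ genFun a x := by
  linarith [genFun_add_mul_genFunDeriv_le ha ht hx hdt hgx]

theorem mul_genFunDeriv_lt_genFun {m : ℕ} (ha : ∀ n, 0 ≤ a n) (hm : 2 ≤ m) (ham : 0 < a m)
    (ht : 0 < t) (hx : 0 ≤ x) (hxt : x ≠ t)
    (hdt : Summable fun n : ℕ => (n : ℝ) * a n * t ^ (n - 1))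
    (hgx : Summable fun n => a n * x ^ n) (hEt : genFun a t = t * genFunDeriv a t) :
    x * genFunDeriv a t < genFun a x := by
  linarith [genFun_add_mul_genFunDeriv_lt ha hm ham ht hx hxt hdt hgx]

theorem genFun_pos (ha : ∀ n, 0 ≤ a n) (ha0 : 0 < a 0) (hx : 0 ≤ x)
    (hgx : Summable fun n => a n * x ^ n) : 0 < genFun a x :=
  ha0.trans_le <| by
    simpa [genFun] using hgx.le_tsum 0 fun n _ => mul_nonneg (ha n) (pow_nonneg hx n)

theorem exists_two_le_pos_of_tsum_eq_one (ha : ∀ n, 0 ≤ a n) (hsum : ∑' n, a n = 1)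
    (h01 : a 0 + a 1 < 1) : ∃ m, 2 ≤ m ∧ 0 < a m := by
  by_contra! h
  have hsupp : ∀ n ∉ Finset.range 2, a n = 0 := fun n hn =>
    le_antisymm (h n (not_lt.mp (Finset.mem_range.not.mp hn))) (ha n)
  rw [tsum_eq_sum hsupp] at hsum
  simp only [Finset.sum_range_succ, Finset.range_one, Finset.sum_singleton] at hsum
  linarith

end GeneratingFunction

theorem stmt_17 (a : ℕ → ℝ) (ha : ∀ n, 0 ≤ a n) (ha0 : 0 < a 0)
    (ha01 : a 0 + a 1 < 1)
    (hsum : ∑' n, a n = 1)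
    (hμs : Summable (fun n : ℕ => (n : ℝ) * a n)) (hμ : ∑' n : ℕ, (n : ℝ) * a n < 1)
    (hx1 : ∃ x₁ : ℝ, 0 ≤ x₁ ∧ Summable (fun n : ℕ => (n : ℝ) * a n * x₁ ^ (n - 1)) ∧
      (∑' n : ℕ, a n * x₁ ^ n) ≤ x₁ * ∑' n : ℕ, (n : ℝ) * a n * x₁ ^ (n - 1)) :
    ∃ x₀ : ℝ, 0 ≤ x₀ ∧ Summable (fun n : ℕ => (n : ℝ) * a n * x₀ ^ (n - 1)) ∧
      (∑' n : ℕ, a n * x₀ ^ n) = x₀ * (∑' n : ℕ, (n : ℝ) * a n * x₀ ^ (n - 1)) ∧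
      (∀ y : ℝ, 0 ≤ y → Summable (fun n : ℕ => (n : ℝ) * a n * y ^ (n - 1)) →
        (∑' n : ℕ, a n * y ^ n) = y * (∑' n : ℕ, (n : ℝ) * a n * y ^ (n - 1)) →
        y = x₀) ∧
      1 < x₀ ∧
      1 < x₀ / ∑' n : ℕ, a n * x₀ ^ n ∧
      (∀ x : ℝ, 0 ≤ x → Summable (fun n : ℕ => a n * x ^ n) →
        x / ∑' n : ℕ, a n * x ^ n ≤ x₀ / ∑' n : ℕ, a n * x₀ ^ n) ∧
      (x₀ = (x₀ / ∑' n : ℕ, a n * x₀ ^ n) * ∑' n : ℕ, a n * x₀ ^ n) ∧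
      (∀ x : ℝ, 0 ≤ x → Summable (fun n : ℕ => a n * x ^ n) →
        x = (x₀ / ∑' n : ℕ, a n * x₀ ^ n) * (∑' n : ℕ, a n * x ^ n) → x₀ ≤ x) := by
  obtain ⟨x₁, hx₁, hd₁, hE₁⟩ := hx1
  obtain ⟨m, hm, ham⟩ := exists_two_le_pos_of_tsum_eq_one ha hsum ha01
  have hd_one : Summable fun n : ℕ => (n : ℝ) * a n * 1 ^ (n - 1) := by simpa using hμs
  have hg_one := summable_mul_pow_of_summable_deriv ha zero_le_one hd_one
  have hG_one : genFun a 1 = 1 := by simpa [genFun] using hsum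
  have hE_one : 1 * genFunDeriv a 1 - genFun a 1 < 0 := by
    simp only [genFunDeriv, one_pow, mul_one, one_mul, hG_one, sub_neg]
    exact hμ
  obtain ⟨x₀, ⟨h1x₀, hx₀x₁⟩, hcrit⟩ := exists_genFun_eq_mul_genFunDeriv ha hm ham zero_le_one hx₁
    hd_one hd₁ hE_one (sub_nonneg.mpr hE₁)
  have hx₀ : 0 < x₀ := one_pos.trans h1x₀
  have hd₀ := summable_mul_pow_of_le (fun n => mul_nonneg n.cast_nonneg (ha n)) hx₀.le hx₀x₁ hd₁
  have hG₀ := genFun_pos ha ha0 hx₀.le (summable_mul_pow_of_summable_deriv ha hx₀.le hd₀)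
  have hD : 0 < genFunDeriv a x₀ := pos_of_mul_pos_right (hcrit ▸ hG₀) hx₀.le
  have hratio : x₀ / genFun a x₀ = (genFunDeriv a x₀)⁻¹ := by
    rw [hcrit, div_mul_cancel_left₀ hx₀.ne']
  refine ⟨x₀, hx₀.le, hd₀, hcrit, fun y hy hdy hEy =>
    eq_of_genFun_eq_mul_genFunDeriv ha hm ham hy hx₀.le hdy hd₀ hEy hcrit, h1x₀, ?_, ?_,
    (div_mul_cancel₀ _ hG₀.ne').symm, ?_⟩
  · show 1 < x₀ / genFun a x₀
    rw [hratio, one_lt_inv₀ hD]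
    simpa [hG_one] using
      mul_genFunDeriv_lt_genFun ha hm ham hx₀ zero_le_one h1x₀.ne hd₀ hg_one hcrit
  · intro x hx hgx
    show x / genFun a x ≤ x₀ / genFun a x₀
    rw [hratio, div_le_iff₀ (genFun_pos ha ha0 hx hgx), le_inv_mul_iff₀ hD, mul_comm]
    exact mul_genFunDeriv_le_genFun ha hx₀.le hx hd₀ hgx hcrit
  · intro x hx hgx hfix
    change x = x₀ / genFun a x₀ * genFun a x at hfix
    rw [hratio, eq_inv_mul_iff_mul_eq₀ hD.ne', mul_comm] at hfix
    by_contra! hlt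
    exact (mul_genFunDeriv_lt_genFun ha hm ham hx₀ hx hlt.ne hd₀ hgx hcrit).ne hfix
end
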